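/- arXiv:0802.4285 — 4 statements merged into one kernel-verified Lean document; each statement's English description precedes it below -/
import Mathlib

section
/- Let s ≥ 1, let A_s = inf{ ln(1-γ^s)/(s ln(1-γ)) : γ ∈ [1/2,1) }, B_s⁻ = sup{ (1-γ^t)/(1-γ)^t : γ ∈ [0,1/2], t ∈ [1/s,s] }, B_s⁺ = sup{ (1+γ^t)/(1+γ)^t : γ ∈ [0,1], t ∈ [1/s,s] }, and B_s = max(B_s⁻, B_s⁺). Then for all α, β ∈ [-1,1] and t ∈ [1/s, s]: |sgn(α)|α|^t - sgn(β)|β|^t| ≤ max( |α-β|^{A_s t}, B_s |α-β|^t ). -/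
/-- The constant `A_s = inf { ln(1-γ^s)/(s ln(1-γ)) : γ ∈ [1/2, 1) }`. -/
noncomputable def Aconst (s : ℝ) : ℝ :=
  sInf ((fun γ : ℝ => Real.log (1 - γ ^ s) / (s * Real.log (1 - γ))) '' Set.Ico (1/2 : ℝ) 1)

/-- `B_s⁻ = sup { (1-γ^t)/(1-γ)^t : γ ∈ [0,1/2], t ∈ [1/s,s] }`. -/
noncomputable def BconstNeg (s : ℝ) : ℝ :=
  sSup ((fun q : ℝ × ℝ => (1 - q.1 ^ q.2) / (1 - q.1) ^ q.2) ''
    (Set.Icc (0:ℝ) (1/2) ×ˢ Set.Icc (1/s) s))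

/-- `B_s⁺ = sup { (1+γ^t)/(1+γ)^t : γ ∈ [0,1], t ∈ [1/s,s] }`. -/
noncomputable def BconstPos (s : ℝ) : ℝ :=
  sSup ((fun q : ℝ × ℝ => (1 + q.1 ^ q.2) / (1 + q.1) ^ q.2) ''
    (Set.Icc (0:ℝ) 1 ×ˢ Set.Icc (1/s) s))

/-- `B_s = max(B_s⁻, B_s⁺)`. -/
noncomputable def Bconst (s : ℝ) : ℝ := max (BconstNeg s) (BconstPos s)

/-!
By the symmetries `(α, β) ↦ (β, α)` and `(α, β) ↦ (-α, -β)` we may assume `|β| ≤ α`. Writing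
`a = α`, `b = |β| = γ a` with `γ ∈ [0, 1]`, both sides are homogeneous in `a` (up to
`a ^ t ≤ a ^ (A_s t)` for `a ≤ 1`), so everything reduces to inequalities in `γ`.
For `β ≥ 0` and `γ ≤ 1/2` the ratio `(1-γ^t)/(1-γ)^t` is at most `B_s⁻`; for `γ ≥ 1/2` the
definition of `A_s` gives `1 - γ^s ≤ (1-γ)^(A_s s)`, which propagates to every `t ≤ s` by
monotonicity in the exponent. For `β < 0` the ratio `(1+γ^t)/(1+γ)^t` is at most `B_s⁺`.
-/

open Real Set

lemma pos_of_mem_Icc_inv {s t : ℝ} (hs : 0 < s) (ht : t ∈ Icc (1/s) s) : 0 < t :=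
  (one_div_pos.mpr hs).trans_le ht.1

lemma exists_mem_Icc_eq_mul_of_le {a b : ℝ} (hb : 0 ≤ b) (hba : b ≤ a) :
    ∃ γ ∈ Icc (0:ℝ) 1, b = a * γ := by
  rcases (hb.trans hba).eq_or_lt with rfl | ha
  · exact ⟨0, ⟨le_rfl, zero_le_one⟩, by simp [le_antisymm hba hb]⟩
  · refine ⟨b / a, ⟨div_nonneg hb ha.le, (div_le_one ha).mpr hba⟩, ?_⟩
    rw [mul_div_cancel₀ _ ha.ne']

section Aconst

lemma Aconst_ratio_nonneg {s γ : ℝ} (hs : 0 < s) (hγ : γ ∈ Ico (1/2 : ℝ) 1) :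
    0 ≤ log (1 - γ ^ s) / (s * log (1 - γ)) := by
  have hγ0 : 0 < γ := by linarith [hγ.1]
  have hγs : γ ^ s < 1 := rpow_lt_one hγ0.le hγ.2 hs
  refine div_nonneg_of_nonpos (log_nonpos ?_ ?_) ?_
  · linarith
  · linarith [rpow_nonneg hγ0.le s]
  · exact mul_nonpos_of_nonneg_of_nonpos hs.le (log_nonpos (by linarith [hγ.2]) (by linarith))

lemma Aconst_bddBelow {s : ℝ} (hs : 0 < s) :
    BddBelow ((fun γ : ℝ => log (1 - γ ^ s) / (s * log (1 - γ))) '' Ico (1/2 : ℝ) 1) := by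
  refine ⟨0, ?_⟩
  rintro _ ⟨γ, hγ, rfl⟩
  exact Aconst_ratio_nonneg hs hγ

lemma Aconst_le_ratio {s γ : ℝ} (hs : 0 < s) (hγ : γ ∈ Ico (1/2 : ℝ) 1) :
    Aconst s ≤ log (1 - γ ^ s) / (s * log (1 - γ)) :=
  csInf_le (Aconst_bddBelow hs) ⟨γ, hγ, rfl⟩

lemma Aconst_nonneg {s : ℝ} (hs : 0 < s) : 0 ≤ Aconst s := by
  refine le_csInf ⟨_, ⟨1/2, ⟨le_rfl, by norm_num⟩, rfl⟩⟩ ?_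
  rintro _ ⟨γ, hγ, rfl⟩
  exact Aconst_ratio_nonneg hs hγ

lemma Aconst_le_one {s : ℝ} (hs : 1 ≤ s) : Aconst s ≤ 1 := by
  have hs0 : 0 < s := zero_lt_one.trans_le hs
  refine (Aconst_le_ratio hs0 ⟨le_rfl, by norm_num⟩).trans ?_
  have hhalf : (1/2 : ℝ) ^ s ≤ 1/2 := by
    simpa using rpow_le_rpow_of_exponent_ge (by norm_num : (0:ℝ) < 1/2) (by norm_num) hs
  rw [div_le_one_of_neg (mul_neg_of_pos_of_neg hs0 (log_neg (by norm_num) (by norm_num))),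
    show (1 : ℝ) - 1/2 = 1/2 by norm_num, ← log_rpow (by norm_num)]
  exact log_le_log (by positivity) (by linarith)

lemma one_sub_rpow_le_one_sub_rpow_Aconst {s γ : ℝ} (hs : 0 < s) (hγ : γ ∈ Ico (1/2 : ℝ) 1) :
    1 - γ ^ s ≤ (1 - γ) ^ (Aconst s * s) := by
  have hγ0 : 0 < γ := by linarith [hγ.1]
  have h1γ : 0 < 1 - γ := by linarith [hγ.2]
  have hden : s * log (1 - γ) < 0 := mul_neg_of_pos_of_neg hs (log_neg h1γ (by linarith))
  have hlog : log (1 - γ ^ s) ≤ log (1 - γ) * (Aconst s * s) := by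
    have h := mul_le_mul_of_nonpos_right (Aconst_le_ratio hs hγ) hden.le
    rw [div_mul_cancel₀ _ hden.ne] at h
    linarith
  calc 1 - γ ^ s = exp (log (1 - γ ^ s)) :=
        (exp_log (by linarith [rpow_lt_one hγ0.le hγ.2 hs])).symm
    _ ≤ exp (log (1 - γ) * (Aconst s * s)) := exp_le_exp.mpr hlog
    _ = (1 - γ) ^ (Aconst s * s) := (rpow_def_of_pos h1γ _).symm

lemma one_sub_rpow_le_one_sub_rpow_Aconst_mul {s γ t : ℝ} (hs : 0 < s)
    (hγ : γ ∈ Icc (1/2 : ℝ) 1) (hts : t ≤ s) :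
    1 - γ ^ t ≤ (1 - γ) ^ (Aconst s * t) := by
  rcases hγ.2.eq_or_lt with rfl | hγ1
  · simpa using rpow_nonneg le_rfl (Aconst s * t)
  have hγ0 : 0 < γ := by linarith [hγ.1]
  calc 1 - γ ^ t ≤ 1 - γ ^ s := by
        linarith [rpow_le_rpow_of_exponent_ge hγ0 hγ1.le hts]
    _ ≤ (1 - γ) ^ (Aconst s * s) := one_sub_rpow_le_one_sub_rpow_Aconst hs ⟨hγ.1, hγ1⟩
    _ ≤ (1 - γ) ^ (Aconst s * t) :=
        rpow_le_rpow_of_exponent_ge (by linarith) (by linarith [hγ.1])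
          (mul_le_mul_of_nonneg_left hts (Aconst_nonneg hs))

lemma rpow_sub_mul_rpow_le_Aconst {s a γ t : ℝ} (hs : 1 ≤ s) (ha0 : 0 ≤ a) (ha1 : a ≤ 1)
    (hγ : γ ∈ Icc (1/2 : ℝ) 1) (ht : t ∈ Icc (1/s) s) :
    a ^ t - (a * γ) ^ t ≤ (a - a * γ) ^ (Aconst s * t) := by
  have hs0 : 0 < s := zero_lt_one.trans_le hs
  have ht0 := pos_of_mem_Icc_inv hs0 ht
  have hγ0 : 0 ≤ γ := by linarith [hγ.1]
  have hAt : Aconst s * t ≤ t := mul_le_of_le_one_left ht0.le (Aconst_le_one hs)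
  rw [mul_rpow ha0 hγ0, show a - a * γ = a * (1 - γ) by ring, mul_rpow ha0 (by linarith [hγ.2]),
    ← mul_one_sub]
  exact mul_le_mul
    (rpow_le_rpow_of_exponent_ge' ha0 ha1 (mul_nonneg (Aconst_nonneg hs0) ht0.le) hAt)
    (one_sub_rpow_le_one_sub_rpow_Aconst_mul hs0 hγ ht.2)
    (by linarith [rpow_le_one hγ0 hγ.2 ht0.le]) (rpow_nonneg ha0 _)

end Aconst

section Bconst

lemma BconstNeg_bddAbove {s : ℝ} (hs : 0 < s) :
    BddAbove ((fun q : ℝ × ℝ => (1 - q.1 ^ q.2) / (1 - q.1) ^ q.2) ''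
      (Icc (0:ℝ) (1/2) ×ˢ Icc (1/s) s)) := by
  refine ⟨2 ^ s, ?_⟩
  rintro _ ⟨⟨γ, t⟩, ⟨hγ, ht⟩, rfl⟩
  have ht0 := pos_of_mem_Icc_inv hs ht
  have hnum : 1 - γ ^ t ≤ 1 := by linarith [rpow_nonneg hγ.1 t]
  have hden : (1/2 : ℝ) ^ t ≤ (1 - γ) ^ t := rpow_le_rpow (by norm_num) (by linarith [hγ.2]) ht0.le
  calc (1 - γ ^ t) / (1 - γ) ^ t ≤ 1 / (1/2 : ℝ) ^ t :=
        div_le_div₀ zero_le_one hnum (by positivity) hden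
    _ = 2 ^ t := by rw [div_rpow zero_le_one zero_le_two, one_rpow, one_div_one_div]
    _ ≤ 2 ^ s := rpow_le_rpow_of_exponent_le one_le_two ht.2

lemma BconstPos_bddAbove {s : ℝ} (hs : 0 < s) :
    BddAbove ((fun q : ℝ × ℝ => (1 + q.1 ^ q.2) / (1 + q.1) ^ q.2) ''
      (Icc (0:ℝ) 1 ×ˢ Icc (1/s) s)) := by
  refine ⟨2, ?_⟩
  rintro _ ⟨⟨γ, t⟩, ⟨hγ, ht⟩, rfl⟩
  have ht0 := pos_of_mem_Icc_inv hs ht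
  have hnum : 1 + γ ^ t ≤ 2 := by linarith [rpow_le_one hγ.1 hγ.2 ht0.le]
  have hden : 1 ≤ (1 + γ) ^ t := one_le_rpow (by linarith [hγ.1]) ht0.le
  simpa using div_le_div₀ zero_le_two hnum zero_lt_one hden

lemma one_sub_rpow_div_le_Bconst {s γ t : ℝ} (hs : 0 < s) (hγ : γ ∈ Icc (0:ℝ) (1/2))
    (ht : t ∈ Icc (1/s) s) : (1 - γ ^ t) / (1 - γ) ^ t ≤ Bconst s :=
  (le_csSup (BconstNeg_bddAbove hs) ⟨(γ, t), ⟨hγ, ht⟩, rfl⟩).trans (le_max_left _ _)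

lemma one_add_rpow_div_le_Bconst {s γ t : ℝ} (hs : 0 < s) (hγ : γ ∈ Icc (0:ℝ) 1)
    (ht : t ∈ Icc (1/s) s) : (1 + γ ^ t) / (1 + γ) ^ t ≤ Bconst s :=
  (le_csSup (BconstPos_bddAbove hs) ⟨(γ, t), ⟨hγ, ht⟩, rfl⟩).trans (le_max_right _ _)

lemma rpow_sub_mul_rpow_le_Bconst {s a γ t : ℝ} (hs : 0 < s) (ha : 0 ≤ a)
    (hγ : γ ∈ Icc (0:ℝ) (1/2)) (ht : t ∈ Icc (1/s) s) :
    a ^ t - (a * γ) ^ t ≤ Bconst s * (a - a * γ) ^ t := by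
  have h1γ : 0 < 1 - γ := by linarith [hγ.2]
  have hfac : a ^ t - (a * γ) ^ t = (1 - γ ^ t) / (1 - γ) ^ t * (a - a * γ) ^ t := by
    rw [show a - a * γ = a * (1 - γ) by ring, mul_rpow ha h1γ.le, mul_rpow ha hγ.1]
    field_simp [(rpow_pos_of_pos h1γ t).ne']
  rw [hfac]
  exact mul_le_mul_of_nonneg_right (one_sub_rpow_div_le_Bconst hs hγ ht)
    (rpow_nonneg (by nlinarith) t)

lemma rpow_add_mul_rpow_le_Bconst {s a γ t : ℝ} (hs : 0 < s) (ha : 0 ≤ a)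
    (hγ : γ ∈ Icc (0:ℝ) 1) (ht : t ∈ Icc (1/s) s) :
    a ^ t + (a * γ) ^ t ≤ Bconst s * (a + a * γ) ^ t := by
  have h1γ : 0 < 1 + γ := by linarith [hγ.1]
  have hfac : a ^ t + (a * γ) ^ t = (1 + γ ^ t) / (1 + γ) ^ t * (a + a * γ) ^ t := by
    rw [show a + a * γ = a * (1 + γ) by ring, mul_rpow ha h1γ.le, mul_rpow ha hγ.1]
    field_simp [(rpow_pos_of_pos h1γ t).ne']
  rw [hfac]
  exact mul_le_mul_of_nonneg_right (one_add_rpow_div_le_Bconst hs hγ ht)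
    (rpow_nonneg (by nlinarith [hγ.1]) t)

end Bconst

lemma rpow_sub_rpow_le_max {s a b t : ℝ} (hs : 1 ≤ s) (hb : 0 ≤ b) (hba : b ≤ a) (ha : a ≤ 1)
    (ht : t ∈ Icc (1/s) s) :
    a ^ t - b ^ t ≤ max ((a - b) ^ (Aconst s * t)) (Bconst s * (a - b) ^ t) := by
  obtain ⟨γ, hγ, rfl⟩ := exists_mem_Icc_eq_mul_of_le hb hba
  have ha0 : 0 ≤ a := hb.trans hba
  rcases le_total γ (1/2) with hγ2 | hγ2
  · exact le_max_of_le_right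
      (rpow_sub_mul_rpow_le_Bconst (zero_lt_one.trans_le hs) ha0 ⟨hγ.1, hγ2⟩ ht)
  · exact le_max_of_le_left (rpow_sub_mul_rpow_le_Aconst hs ha0 ha ⟨hγ2, hγ.2⟩ ht)

lemma rpow_add_rpow_le_Bconst {s a b t : ℝ} (hs : 0 < s) (hb : 0 ≤ b) (hba : b ≤ a)
    (ht : t ∈ Icc (1/s) s) : a ^ t + b ^ t ≤ Bconst s * (a + b) ^ t := by
  obtain ⟨γ, hγ, rfl⟩ := exists_mem_Icc_eq_mul_of_le hb hba
  exact rpow_add_mul_rpow_le_Bconst hs (hb.trans hba) hγ ht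

section signedRpow

noncomputable def signedRpow (t x : ℝ) : ℝ := Real.sign x * |x| ^ t

lemma signedRpow_neg (t x : ℝ) : signedRpow t (-x) = -signedRpow t x := by
  simp [signedRpow, Real.sign_neg]

lemma signedRpow_of_nonneg {t x : ℝ} (ht : t ≠ 0) (hx : 0 ≤ x) : signedRpow t x = x ^ t := by
  rcases hx.eq_or_lt with rfl | hx
  · simp [signedRpow, zero_rpow ht]
  · rw [signedRpow, Real.sign_of_pos hx, abs_of_pos hx, one_mul]

lemma abs_signedRpow_sub_le_of_abs_le {s α β t : ℝ} (hs : 1 ≤ s) (ht : t ∈ Icc (1/s) s)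
    (hα : α ≤ 1) (hβα : |β| ≤ α) :
    |signedRpow t α - signedRpow t β| ≤
      max (|α - β| ^ (Aconst s * t)) (Bconst s * |α - β| ^ t) := by
  have ht0 := pos_of_mem_Icc_inv (zero_lt_one.trans_le hs) ht
  have hα0 : 0 ≤ α := (abs_nonneg β).trans hβα
  have hβα' : -β ≤ α := (neg_le_abs β).trans hβα
  rw [signedRpow_of_nonneg ht0.ne' hα0, abs_of_nonneg (by linarith [le_abs_self β] : 0 ≤ α - β)]
  rcases le_or_gt 0 β with hβ | hβ
  · have hβα : β ≤ α := (le_abs_self β).trans hβα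
    rw [signedRpow_of_nonneg ht0.ne' hβ,
      abs_of_nonneg (sub_nonneg.mpr (rpow_le_rpow hβ hβα ht0.le))]
    exact rpow_sub_rpow_le_max hs hβ hβα hα ht
  · rw [← neg_neg β, signedRpow_neg, signedRpow_of_nonneg ht0.ne' (by linarith), sub_neg_eq_add,
      sub_neg_eq_add,
      abs_of_nonneg (add_nonneg (rpow_nonneg hα0 t) (rpow_nonneg (by linarith) t))]
    exact le_max_of_le_right
      (rpow_add_rpow_le_Bconst (zero_lt_one.trans_le hs) (by linarith) hβα' ht)

lemma abs_signedRpow_sub_le_of_abs_le_abs {s α β t : ℝ} (hs : 1 ≤ s) (ht : t ∈ Icc (1/s) s)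
    (hα : |α| ≤ 1) (hβα : |β| ≤ |α|) :
    |signedRpow t α - signedRpow t β| ≤
      max (|α - β| ^ (Aconst s * t)) (Bconst s * |α - β| ^ t) := by
  rcases le_total 0 α with hα0 | hα0
  · rw [abs_of_nonneg hα0] at hα hβα
    exact abs_signedRpow_sub_le_of_abs_le hs ht hα hβα
  · rw [abs_of_nonpos hα0] at hα hβα
    have h := abs_signedRpow_sub_le_of_abs_le hs ht hα (by rwa [abs_neg] : |-β| ≤ -α)
    rwa [signedRpow_neg, signedRpow_neg, neg_sub_neg, neg_sub_neg, abs_sub_comm,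
      abs_sub_comm β] at h

end signedRpow

theorem stmt4 (s : ℝ) (hs : 1 ≤ s) (α β t : ℝ)
    (hα : α ∈ Set.Icc (-1:ℝ) 1) (hβ : β ∈ Set.Icc (-1:ℝ) 1) (ht : t ∈ Set.Icc (1/s) s) :
    |Real.sign α * |α| ^ t - Real.sign β * |β| ^ t| ≤
      max (|α - β| ^ (Aconst s * t)) (Bconst s * |α - β| ^ t) := by
  change |signedRpow t α - signedRpow t β| ≤ _
  rcases le_total |β| |α| with hβα | hαβ
  · exact abs_signedRpow_sub_le_of_abs_le_abs hs ht (abs_le.mpr hα) hβα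
  · rw [abs_sub_comm, abs_sub_comm α]
    exact abs_signedRpow_sub_le_of_abs_le_abs hs ht (abs_le.mpr hβ) hαβ
end

section
/- Let (X, 𝔅, μ) be a measure space, p : X → [s, s+ε] measurable with 1 ≤ s < s+ε, Θ(f) = ∫ |f|^{p(x)} dμ, and f with Nakano norm ‖f‖ ≤ 1. Then |Θ(f) − ‖f‖^{s+ε}| ≤ (ε/s)·|ln Θ(f)|·Θ(f), with the convention 0·ln 0 = 0. -/
open MeasureTheory

theorem stmt8 {X : Type*} [MeasurableSpace X] (μ : Measure X) (p f : X → ℝ)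
    (s ε : ℝ) (hs : 1 ≤ s) (hε : 0 < ε)
    (hp : Measurable p) (hpr : ∀ᵐ x ∂μ, p x ∈ Set.Icc s (s + ε))
    (hf : Measurable f) (a : ℝ) (ha0 : 0 < a) (ha1 : a ≤ 1)
    (hnorm : ∫⁻ x, ENNReal.ofReal ((|f x| / a) ^ p x) ∂μ = 1) :
    |(∫⁻ x, ENNReal.ofReal (|f x| ^ p x) ∂μ).toReal - a ^ (s + ε)| ≤
      (ε / s) * |Real.log (∫⁻ x, ENNReal.ofReal (|f x| ^ p x) ∂μ).toReal| *
        (∫⁻ x, ENNReal.ofReal (|f x| ^ p x) ∂μ).toReal := by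
  have hs0 : (0 : ℝ) < s := lt_of_lt_of_le one_pos hs
  set I := ∫⁻ x, ENNReal.ofReal (|f x| ^ p x) ∂μ with hIdef
  have hpt : ∀ x, |f x| ^ p x = a ^ p x * (|f x| / a) ^ p x := by
    intro x
    rw [Real.div_rpow (abs_nonneg _) ha0.le]
    field_simp
  have hub : I ≤ ENNReal.ofReal (a ^ s) := by
    calc I ≤ ∫⁻ x, ENNReal.ofReal (a ^ s * (|f x| / a) ^ p x) ∂μ := by
            refine lintegral_mono_ae ?_
            filter_upwards [hpr] with x hx
            refine ENNReal.ofReal_le_ofReal ?_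
            rw [hpt x]
            exact mul_le_mul_of_nonneg_right
              (Real.rpow_le_rpow_of_exponent_ge ha0 ha1 hx.1)
              (Real.rpow_nonneg (div_nonneg (abs_nonneg _) ha0.le) _)
      _ = ENNReal.ofReal (a ^ s) := by
            simp_rw [ENNReal.ofReal_mul (Real.rpow_nonneg ha0.le _)]
            rw [lintegral_const_mul' _ _ ENNReal.ofReal_ne_top, hnorm, mul_one]
  have hlb : ENNReal.ofReal (a ^ (s + ε)) ≤ I := by
    calc ENNReal.ofReal (a ^ (s + ε))
        = ∫⁻ x, ENNReal.ofReal (a ^ (s + ε) * (|f x| / a) ^ p x) ∂μ := by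
            simp_rw [ENNReal.ofReal_mul (Real.rpow_nonneg ha0.le _)]
            rw [lintegral_const_mul' _ _ ENNReal.ofReal_ne_top, hnorm, mul_one]
      _ ≤ I := by
            refine lintegral_mono_ae ?_
            filter_upwards [hpr] with x hx
            refine ENNReal.ofReal_le_ofReal ?_
            rw [hpt x]
            exact mul_le_mul_of_nonneg_right
              (Real.rpow_le_rpow_of_exponent_ge ha0 ha1 hx.2)
              (Real.rpow_nonneg (div_nonneg (abs_nonneg _) ha0.le) _)
  have hItop : I ≠ ⊤ := (hub.trans_lt ENNReal.ofReal_lt_top).ne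
  set T := I.toReal with hTdef
  have h1 : a ^ (s + ε) ≤ T :=
    (ENNReal.ofReal_le_iff_le_toReal hItop).mp hlb
  have h2 : T ≤ a ^ s :=
    ENNReal.toReal_le_of_le_ofReal (Real.rpow_nonneg ha0.le _) hub
  have hT0 : 0 < T := lt_of_lt_of_le (Real.rpow_pos_of_pos ha0 _) h1
  have hT1 : T ≤ 1 := h2.trans (Real.rpow_le_one ha0.le ha1 hs0.le)
  -- a ≥ T^(1/s)
  have ha' : T ^ (1 / s) ≤ a := by
    have := Real.rpow_le_rpow hT0.le h2 (by positivity : (0:ℝ) ≤ 1 / s)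
    rw [one_div] at this ⊢; rwa [Real.rpow_rpow_inv ha0.le hs0.ne'] at this
  have hkey : T ^ (1 + ε / s) ≤ a ^ (s + ε) := by
    have := Real.rpow_le_rpow (Real.rpow_nonneg hT0.le _) ha'
      (by positivity : (0:ℝ) ≤ s + ε)
    rw [← Real.rpow_mul hT0.le] at this
    have heq : 1 / s * (s + ε) = 1 + ε / s := by field_simp
    rwa [heq] at this
  have hsplit : T ^ (1 + ε / s) = T * T ^ (ε / s) := by
    rw [Real.rpow_add hT0, Real.rpow_one]
  have hlog : Real.log (T ^ (ε / s)) ≤ T ^ (ε / s) - 1 :=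
    Real.log_le_sub_one_of_pos (Real.rpow_pos_of_pos hT0 _)
  have hlogr : Real.log (T ^ (ε / s)) = (ε / s) * Real.log T :=
    Real.log_rpow hT0 _
  have habs : |Real.log T| = -Real.log T :=
    abs_of_nonpos (Real.log_nonpos hT0.le hT1)
  rw [abs_of_nonneg (by linarith : (0:ℝ) ≤ T - a ^ (s + ε)), habs]
  have hTε : T ^ (ε / s) ≤ 1 := Real.rpow_le_one hT0.le hT1 (by positivity)
  nlinarith [hkey, hsplit, hlog, hlogr, hT0, hTε,
    mul_le_mul_of_nonneg_left (sub_nonneg.mpr hTε) hT0.le]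
end

section
/- There is a constant C > 0 such that for every positive integer n and every sequence (a_k)_{k<ω} of nonnegative reals with Σ_k a_k ≤ 1, one has Σ_k a_k |ln a_k|/(k+n) ≤ C/√n, with the convention 0·ln 0 = 0. -/
theorem stmt9 : ∃ C : ℝ, 0 < C ∧ ∀ n : ℕ, 0 < n → ∀ a : ℕ → ℝ,
    (∀ k, 0 ≤ a k) → Summable a → (∑' k, a k) ≤ 1 →
    (∑' k : ℕ, a k * |Real.log (a k)| / ((k : ℝ) + n)) ≤ C / Real.sqrt n := by
  refine ⟨3, by norm_num, fun n hn a ha hsum hle => ?_⟩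
  have hn' : (0:ℝ) < n := by exact_mod_cast hn
  set s := Real.sqrt n with hs
  have hs0 : 0 < s := Real.sqrt_pos.mpr hn'
  have hss : s * s = n := Real.mul_self_sqrt hn'.le
  have hak1 : ∀ k, a k ≤ 1 := fun k => le_trans (Summable.le_tsum hsum k (fun i _ => ha i)) hle
  have hd : ∀ k : ℕ, (0:ℝ) < (k:ℝ) + n := fun k => by positivity
  -- pointwise bound
  have key : ∀ k, a k * |Real.log (a k)| / ((k:ℝ) + n) ≤ a k / s + s / ((k:ℝ)+n)^2 := by
    intro k
    have hgnn : (0:ℝ) ≤ a k / s + s / ((k:ℝ)+n)^2 :=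
      add_nonneg (div_nonneg (ha k) hs0.le) (div_nonneg hs0.le (by positivity))
    rcases eq_or_lt_of_le (ha k) with h0 | h0
    · rw [← h0]
      simpa using div_nonneg hs0.le (sq_nonneg ((k:ℝ)+(n:ℝ)))
    · have hsa : 0 < Real.sqrt (a k) := Real.sqrt_pos.mpr h0
      have hsq : Real.sqrt (a k) ^ 2 = a k := Real.sq_sqrt (ha k)
      have h1 : a k * |Real.log (a k)| ≤ 2 * Real.sqrt (a k) := by
        have hlog : Real.log (a k) ≤ 0 := Real.log_nonpos (ha k) (hak1 k)
        rw [abs_of_nonpos hlog]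
        have h3 : Real.log (a k) = 2 * Real.log (Real.sqrt (a k)) := by
          conv_lhs => rw [← hsq]
          rw [Real.log_pow]; push_cast; ring
        have h2 : Real.log (Real.sqrt (a k))⁻¹ ≤ (Real.sqrt (a k))⁻¹ - 1 :=
          Real.log_le_sub_one_of_pos (by positivity)
        rw [Real.log_inv] at h2
        have h4 : -Real.log (a k) ≤ 2 * (Real.sqrt (a k))⁻¹ := by
          rw [h3]; nlinarith
        have h5 : a k * -Real.log (a k) ≤ a k * (2 * (Real.sqrt (a k))⁻¹) :=
          mul_le_mul_of_nonneg_left h4 (ha k)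
        have h6 : a k * (2 * (Real.sqrt (a k))⁻¹) = 2 * Real.sqrt (a k) := by
          field_simp
          nlinarith [hsq]
        rw [h6] at h5
        exact h5
      have h7 : a k * |Real.log (a k)| / ((k:ℝ) + n) ≤ 2 * Real.sqrt (a k) / ((k:ℝ)+n) := by
        gcongr
      refine h7.trans ?_
      rw [div_add_div _ _ (ne_of_gt hs0) (by positivity), div_le_div_iff₀ (hd k) (by positivity)]
      have hkey2 : 2 * Real.sqrt (a k) * ((k:ℝ)+n) * s ≤ a k * ((k:ℝ)+n)^2 + s * s := by
        nlinarith [sq_nonneg (Real.sqrt (a k) * ((k:ℝ)+n) - s), hsq]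
      have hkey3 := mul_le_mul_of_nonneg_right hkey2 (hd k).le
      nlinarith [hkey3]
  -- summability
  have hsum1 : Summable (fun k : ℕ => a k / s) := hsum.div_const s
  have hsq2 : Summable (fun k : ℕ => (((k:ℝ)+n)^2)⁻¹) := by
    have h := (summable_nat_add_iff n).mpr (Real.summable_one_div_nat_pow.mpr one_lt_two)
    refine h.congr fun k => ?_
    push_cast
    ring
  have hsum2 : Summable (fun k : ℕ => s / ((k:ℝ)+n)^2) := by
    refine (hsq2.mul_left s).congr fun k => ?_
    exact (div_eq_mul_inv s _).symm
  have hsumg : Summable (fun k : ℕ => a k / s + s / ((k:ℝ)+n)^2) := hsum1.add hsum2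
  have hfnn : ∀ k, 0 ≤ a k * |Real.log (a k)| / ((k:ℝ) + n) := fun k =>
    div_nonneg (mul_nonneg (ha k) (abs_nonneg _)) (hd k).le
  have hsumf : Summable (fun k : ℕ => a k * |Real.log (a k)| / ((k:ℝ) + n)) :=
    Summable.of_nonneg_of_le hfnn key hsumg
  have hstep : (∑' k : ℕ, a k * |Real.log (a k)| / ((k:ℝ) + n)) ≤
      ∑' k : ℕ, (a k / s + s / ((k:ℝ)+n)^2) :=
    Summable.tsum_le_tsum key hsumf hsumg
  -- tail bound
  have htail : (∑' k : ℕ, (((k:ℝ)+n)^2)⁻¹) ≤ 2 / n := by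
    refine Summable.tsum_le_of_sum_range_le hsq2 fun N => ?_
    have hpt : ∀ k : ℕ, (((k:ℝ)+n)^2)⁻¹ ≤ 2 * (((k:ℝ)+n)⁻¹ - ((k:ℝ)+1+n)⁻¹) := by
      intro k
      have hd1 : (0:ℝ) < (k:ℝ)+n := hd k
      have hd2 : (0:ℝ) < (k:ℝ)+1+n := by linarith
      have hk : (1:ℝ) ≤ (k:ℝ)+n := by
        have : (0:ℝ) ≤ (k:ℝ) := Nat.cast_nonneg k
        have : (1:ℝ) ≤ n := by exact_mod_cast hn
        linarith [Nat.cast_nonneg (α := ℝ) k]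
      rw [inv_sub_inv (ne_of_gt hd1) (ne_of_gt hd2), inv_eq_one_div, mul_div_assoc',
        div_le_div_iff₀ (by positivity) (by positivity)]
      nlinarith
    calc ∑ k ∈ Finset.range N, (((k:ℝ)+n)^2)⁻¹
        ≤ ∑ k ∈ Finset.range N, 2 * (((k:ℝ)+n)⁻¹ - ((k:ℝ)+1+n)⁻¹) :=
          Finset.sum_le_sum fun k _ => hpt k
      _ = 2 * ∑ k ∈ Finset.range N,
            ((fun j : ℕ => ((j:ℝ)+n)⁻¹) k - (fun j : ℕ => ((j:ℝ)+n)⁻¹) (k+1)) := by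
          rw [Finset.mul_sum]
          refine Finset.sum_congr rfl fun k _ => ?_
          push_cast
          ring_nf
      _ = 2 * (((0:ℕ):ℝ)+n)⁻¹ - 2 * (((N:ℕ):ℝ)+n)⁻¹ := by
          rw [Finset.sum_range_sub']
          ring
      _ ≤ 2 / n := by
          have h1 : (0:ℝ) ≤ (((N:ℕ):ℝ)+n)⁻¹ := by positivity
          have h2 : (((0:ℕ):ℝ)+n)⁻¹ = 1/(n:ℝ) := by norm_num
          rw [h2]
          rw [div_eq_mul_inv, div_eq_mul_inv] at *
          linarith
  -- put it all together
  have e2 : (∑' k : ℕ, s / ((k:ℝ)+n)^2) = s * ∑' k : ℕ, (((k:ℝ)+n)^2)⁻¹ := by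
    rw [← tsum_mul_left]
    exact tsum_congr fun k => (div_eq_mul_inv s _)
  have hfinal : (∑' k : ℕ, (a k / s + s / ((k:ℝ)+n)^2)) ≤ 3 / s := by
    rw [Summable.tsum_add hsum1 hsum2, tsum_div_const, e2]
    have b1 : (∑' k, a k) / s ≤ 1 / s := by gcongr
    have b2 : s * (∑' k : ℕ, (((k:ℝ)+n)^2)⁻¹) ≤ s * (2/n) :=
      mul_le_mul_of_nonneg_left htail hs0.le
    have e3 : s * (2/(n:ℝ)) = 2/s := by
      field_simp
      nlinarith [hss]
    have e4 : (1:ℝ)/s + 2/s = 3/s := by ring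
    linarith
  exact hstep.trans hfinal
end

section
/- Let K ⊆ [1,r] be compact and s > 1. Then there exists a finite set K_s ⊆ [1,r] such that: for every atomless measure space (X,𝔅,μ) and every measurable p : X → [1,r] with essential range equal to K, there exists a measurable q : X → [1,r] with essential range equal to K_s and 1 ≤ q(x)/p(x) ≤ s for almost all x ∈ X. -/
/-!
Round `p` up to the grid `a + (s - 1)ℤ` and cap the result at `r`. Then `p ≤ q ≤ p + (s - 1) ≤ s p`,
and `q = g ∘ p` with `g` monotone and taking finitely many values on `[1, r]`. The essential range
of `q` is `g '' K` provided every value `g y`, `y ∈ K`, is taken on a whole neighbourhood of some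
point of `K`. That holds unless `y` is a grid point isolated in `K` from the left, since the points
of `K` just below a grid point round up to it. The left-isolated points of `K` are countable, so a
suitable shift `a` of the grid avoids them.
-/

open MeasureTheory

open Filter Set Topology

namespace MeasureTheory.Measure

lemma support_map_eq_setOf {X α : Type*} [MeasurableSpace X] [TopologicalSpace α]
    [MeasurableSpace α] [OpensMeasurableSpace α] {μ : Measure X} {p : X → α}
    (hp : Measurable p) : (μ.map p).support = {y | ∀ U ∈ 𝓝 y, 0 < μ (p ⁻¹' U)} := by
  ext y
  rw [(nhds_basis_opens y).mem_measureSupport]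
  constructor
  · intro h U hU
    obtain ⟨V, ⟨hyV, hV⟩, hVU⟩ := (nhds_basis_opens y).mem_iff.1 hU
    calc 0 < μ.map p V := h V ⟨hyV, hV⟩
      _ = μ (p ⁻¹' V) := map_apply hp hV.measurableSet
      _ ≤ μ (p ⁻¹' U) := measure_mono (preimage_mono hVU)
  · rintro h V ⟨hyV, hV⟩
    rw [map_apply hp hV.measurableSet]
    exact h V (hV.mem_nhds hyV)

lemma support_map_eq_image {α β : Type*} [TopologicalSpace α] [MeasurableSpace α]
    [HereditarilyLindelofSpace α] [TopologicalSpace β] [MeasurableSpace β]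
    [OpensMeasurableSpace β] {ν : Measure α} {f : α → β} (hf : Measurable f)
    (hclosed : IsClosed (f '' ν.support))
    (hloc : ∀ y ∈ ν.support, ∃ z ∈ ν.support, ∀ᶠ w in 𝓝 z, f w = f y) :
    (ν.map f).support = f '' ν.support := by
  refine (support_subset_of_isClosed hclosed ?_).antisymm ?_
  · rw [mem_ae_iff, map_apply hf hclosed.isOpen_compl.measurableSet]
    refine measure_mono_null (fun x hx ↦ ?_) measure_compl_support
    exact fun hxs ↦ hx ⟨x, hxs, rfl⟩
  · rintro _ ⟨y, hy, rfl⟩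
    obtain ⟨z, hz, hzf⟩ := hloc y hy
    rw [mem_support_iff_forall]
    intro V hV
    calc 0 < ν {w | f w = f y} := (mem_support_iff_forall z).1 hz _ hzf
      _ ≤ ν (f ⁻¹' V) :=
        measure_mono fun w (hw : f w = f y) ↦ show f w ∈ V from hw ▸ mem_of_mem_nhds hV
      _ ≤ ν.map f V := le_map_apply hf.aemeasurable V

end MeasureTheory.Measure

noncomputable def roundUp (a δ y : ℝ) : ℝ := a + δ * ⌈(y - a) / δ⌉

section roundUp

variable {a δ : ℝ}

lemma monotone_roundUp (hδ : 0 < δ) : Monotone (roundUp a δ) := fun _ _ _ ↦ by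
  unfold roundUp
  gcongr

lemma le_roundUp (hδ : 0 < δ) (y : ℝ) : y ≤ roundUp a δ y := by
  have := Int.le_ceil ((y - a) / δ)
  rw [div_le_iff₀ hδ] at this
  unfold roundUp
  linarith

lemma roundUp_lt (hδ : 0 < δ) (y : ℝ) : roundUp a δ y < y + δ := by
  have := Int.ceil_lt_add_one ((y - a) / δ)
  rw [← sub_lt_iff_lt_add, lt_div_iff₀ hδ] at this
  unfold roundUp
  linarith

lemma roundUp_eq_of_mem_Ioc (hδ : 0 < δ) {y w : ℝ}
    (hw : w ∈ Ioc (roundUp a δ y - δ) (roundUp a δ y)) : roundUp a δ w = roundUp a δ y := by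
  unfold roundUp at hw ⊢
  have hceil : ⌈(w - a) / δ⌉ = ⌈(y - a) / δ⌉ := by
    rw [Int.ceil_eq_iff, lt_div_iff₀ hδ, div_le_iff₀ hδ]
    constructor <;> linarith [hw.1, hw.2]
  rw [hceil]

lemma eventually_roundUp_eq (hδ : 0 < δ) {y : ℝ} (hy : y < roundUp a δ y) :
    ∀ᶠ w in 𝓝 y, roundUp a δ w = roundUp a δ y := by
  have hmem : Ioo (roundUp a δ y - δ) (roundUp a δ y) ∈ 𝓝 y :=
    isOpen_Ioo.mem_nhds ⟨by linarith [roundUp_lt (a := a) hδ y], hy⟩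
  filter_upwards [hmem] with w hw
  exact roundUp_eq_of_mem_Ioc hδ (Ioo_subset_Ioc_self hw)

lemma finite_image_roundUp_Icc (hδ : 0 < δ) (l u : ℝ) : (roundUp a δ '' Icc l u).Finite := by
  refine ((finite_Icc ⌈(l - a) / δ⌉ ⌈(u - a) / δ⌉).image fun k : ℤ ↦ a + δ * k).subset ?_
  rintro _ ⟨y, hy, rfl⟩
  exact ⟨_, ⟨Int.ceil_mono (by gcongr; exact hy.1), Int.ceil_mono (by gcongr; exact hy.2)⟩, rfl⟩

lemma exists_lt_roundUp_of_countable (hδ : 0 < δ) {L : Set ℝ} (hL : L.Countable) :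
    ∃ a, ∀ y ∈ L, y < roundUp a δ y := by
  have hbad : (⋃ k : ℤ, (fun y ↦ y - δ * k) '' L).Countable :=
    countable_iUnion fun k ↦ hL.image _
  obtain ⟨a, ha⟩ := (hbad.dense_compl ℝ).nonempty
  refine ⟨a, fun y hy ↦ (le_roundUp hδ y).lt_of_ne fun hyy ↦ ha ?_⟩
  refine mem_iUnion.2 ⟨⌈(y - a) / δ⌉, y, hy, ?_⟩
  unfold roundUp at hyy
  linarith

lemma exists_eventually_roundUp_eq (hδ : 0 < δ) {K : Set ℝ} {y : ℝ} (hy : y ∈ K)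
    (hleft : roundUp a δ y = y → (𝓝[K ∩ Iio y] y).NeBot) :
    ∃ z ∈ K, ∀ᶠ w in 𝓝 z, roundUp a δ w = roundUp a δ y := by
  rcases (le_roundUp hδ y).lt_or_eq with hlt | heq
  · exact ⟨y, hy, eventually_roundUp_eq hδ hlt⟩
  have hne := hleft heq.symm
  have hIoo : Ioo (y - δ) y ∈ 𝓝[K ∩ Iio y] y :=
    nhdsWithin_mono _ inter_subset_right (Ioo_mem_nhdsLT (by linarith))
  obtain ⟨z, ⟨hzK, -⟩, hz⟩ := hne.nonempty_of_mem (inter_mem self_mem_nhdsWithin hIoo)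
  have hzy : roundUp a δ z = roundUp a δ y :=
    roundUp_eq_of_mem_Ioc hδ (by rw [← heq]; exact Ioo_subset_Ioc_self hz)
  exact ⟨z, hzK, hzy ▸ eventually_roundUp_eq hδ (hzy ▸ heq ▸ hz.2)⟩

lemma min_roundUp_mem_Icc (hδ : 0 < δ) {r y : ℝ} (hyr : y ≤ r) :
    min r (roundUp a δ y) ∈ Icc y (y + δ) :=
  ⟨le_min hyr (le_roundUp hδ y), (min_le_right _ _).trans (roundUp_lt hδ y).le⟩

lemma div_mem_Icc_of_mem_Icc {y q s : ℝ} (hy : 1 ≤ y) (hq : q ∈ Icc y (y + (s - 1))) :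
    q / y ∈ Icc 1 s := by
  have hy0 : 0 < y := by linarith
  rw [mem_Icc, one_le_div hy0, div_le_iff₀ hy0]
  constructor <;> nlinarith [hq.1, hq.2]

end roundUp

theorem stmt15_general (r : ℝ) (K : Set ℝ)
    (hKsub : K ⊆ Set.Icc 1 r) (s : ℝ) (hs : 1 < s) :
    ∃ Ks : Set ℝ, Ks.Finite ∧ Ks ⊆ Set.Icc 1 r ∧
      ∀ (X : Type) (_ : MeasurableSpace X) (μ : Measure X),
        (∀ A : Set X, MeasurableSet A → 0 < μ A →
          ∃ B : Set X, B ⊆ A ∧ MeasurableSet B ∧ 0 < μ B ∧ μ B < μ A) →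
        ∀ p : X → ℝ, Measurable p →
          {y : ℝ | ∀ U ∈ nhds y, 0 < μ (p ⁻¹' U)} = K →
          ∃ q : X → ℝ, Measurable q ∧
            {y : ℝ | ∀ U ∈ nhds y, 0 < μ (q ⁻¹' U)} = Ks ∧
            (∀ᵐ x ∂μ, 1 ≤ q x / p x ∧ q x / p x ≤ s) := by
  have hδ : 0 < s - 1 := sub_pos.2 hs
  obtain ⟨a, ha⟩ :=
    exists_lt_roundUp_of_countable hδ (countable_setOfPred_isolated_left_within (s := K))
  set g : ℝ → ℝ := fun y ↦ min r (roundUp a (s - 1) y) with hg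
  have hgm : Measurable g := measurable_const.min (monotone_roundUp hδ).measurable
  have hgK : (g '' K).Finite :=
    ((finite_image_roundUp_Icc hδ 1 r).image (min r)).subset (by
      rw [hg, ← image_image (min r)]; exact image_mono (image_mono hKsub))
  have hloc : ∀ y ∈ K, ∃ z ∈ K, ∀ᶠ w in 𝓝 z, g w = g y := by
    intro y hy
    obtain ⟨z, hz, hzy⟩ := exists_eventually_roundUp_eq hδ hy fun heq ↦
      neBot_iff.2 fun hbot ↦ (ha y ⟨hy, hbot⟩).ne heq.symm
    exact ⟨z, hz, hzy.mono fun w hw ↦ by simp only [hg, hw]⟩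
  refine ⟨g '' K, hgK, ?_, ?_⟩
  · rintro _ ⟨y, hy, rfl⟩
    exact ⟨(hKsub hy).1.trans (min_roundUp_mem_Icc hδ (hKsub hy).2).1, min_le_left _ _⟩
  intro X _ μ _ p hp hE
  have hsupp : (μ.map p).support = K := by rw [Measure.support_map_eq_setOf hp, hE]
  refine ⟨g ∘ p, hgm.comp hp, ?_, ?_⟩
  · rw [← Measure.support_map_eq_setOf (hgm.comp hp), ← Measure.map_map hgm hp,
      Measure.support_map_eq_image hgm (hsupp ▸ hgK.isClosed) (hsupp ▸ hloc), hsupp]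
  · filter_upwards [ae_of_ae_map hp.aemeasurable (hsupp ▸ Measure.support_mem_ae)] with x hx
    exact div_mem_Icc_of_mem_Icc (hKsub hx).1 (min_roundUp_mem_Icc hδ (hKsub hx).2)

theorem stmt15 (r : ℝ) (hr : 1 ≤ r) (K : Set ℝ) (hK : IsCompact K)
    (hKsub : K ⊆ Set.Icc 1 r) (s : ℝ) (hs : 1 < s) :
    ∃ Ks : Set ℝ, Ks.Finite ∧ Ks ⊆ Set.Icc 1 r ∧
      ∀ (X : Type) (_ : MeasurableSpace X) (μ : Measure X),
        (∀ A : Set X, MeasurableSet A → 0 < μ A →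
          ∃ B : Set X, B ⊆ A ∧ MeasurableSet B ∧ 0 < μ B ∧ μ B < μ A) →
        ∀ p : X → ℝ, Measurable p →
          {y : ℝ | ∀ U ∈ nhds y, 0 < μ (p ⁻¹' U)} = K →
          ∃ q : X → ℝ, Measurable q ∧
            {y : ℝ | ∀ U ∈ nhds y, 0 < μ (q ⁻¹' U)} = Ks ∧
            (∀ᵐ x ∂μ, 1 ≤ q x / p x ∧ q x / p x ≤ s) :=
  stmt15_general r K hKsub s hs
end
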